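/- Let w : ℝ² → ℝ² be defined by w(x₁,x₂) = (0, 4x₁) if 1/2 > |x₁| > |x₂|, w(x₁,x₂) = (−4x₂, 0) if 1/2 > |x₂| > |x₁|, and w = 0 otherwise. Then w is bounded (with |w| ≤ 2) and divergence-free in the sense of distributions on ℝ². -/

import Mathlib

open MeasureTheory Set Filter Topology

noncomputable section

/-- The rotational vector field of one Depauw cell:
`w(x) = (0, 4x₁)` if `1/2 > |x₁| > |x₂|`, `w(x) = (−4x₂, 0)` if `1/2 > |x₂| > |x₁|`,
and `w = 0` otherwise. -/
def wDP : ℝ × ℝ → ℝ × ℝ := fun x =>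
  if |x.1| < 1/2 ∧ |x.2| < |x.1| then (0, 4 * x.1)
  else if |x.2| < 1/2 ∧ |x.1| < |x.2| then (-4 * x.2, 0)
  else (0, 0)

/-- The field `w` is bounded by `2` and divergence-free in the sense
of distributions on `ℝ²`: `∫ w · ∇φ = 0` for all `φ ∈ C_c^∞(ℝ²)`. -/
theorem wDP_bounded_and_divergence_free :
    (∀ x : ℝ × ℝ, ‖wDP x‖ ≤ 2) ∧
    ∀ φ : ℝ × ℝ → ℝ, ContDiff ℝ (⊤ : ℕ∞) φ → HasCompactSupport φ →
      ∫ x : ℝ × ℝ, ((wDP x).1 * fderiv ℝ φ x (1, 0) + (wDP x).2 * fderiv ℝ φ x (0, 1))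
        = 0 := by
  constructor
  · intro x
    rw [wDP]
    split_ifs with h1 h2
    · rw [Prod.norm_def]
      apply max_le
      · simp
      · rw [Real.norm_eq_abs, abs_mul]
        have := h1.1
        rw [abs_of_nonneg (by norm_num : (0:ℝ) ≤ 4)]
        linarith
    · rw [Prod.norm_def]
      apply max_le
      · rw [Real.norm_eq_abs, abs_mul]
        have := h2.1
        rw [abs_of_nonpos (by norm_num : (-4:ℝ) ≤ 0)]
        have h4 : |(-4 : ℝ)| = 4 := by norm_num
        nlinarith [abs_nonneg x.2]
      · simp
    · simp [Prod.norm_def]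
  · intro φ hφ hφs
    have hφc : Continuous φ := hφ.continuous
    have hc1 : Continuous fun x : ℝ × ℝ => fderiv ℝ φ x (1, 0) :=
      (hφ.continuous_fderiv (by simp)).clm_apply continuous_const
    have hc2 : Continuous fun x : ℝ × ℝ => fderiv ℝ φ x (0, 1) :=
      (hφ.continuous_fderiv (by simp)).clm_apply continuous_const
    have hs1 : HasCompactSupport fun x : ℝ × ℝ => fderiv ℝ φ x (1, 0) :=
      (hφs.fderiv ℝ).comp_left (g := fun L : (ℝ × ℝ) →L[ℝ] ℝ => L (1, 0)) rfl
    have hs2 : HasCompactSupport fun x : ℝ × ℝ => fderiv ℝ φ x (0, 1) :=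
      (hφs.fderiv ℝ).comp_left (g := fun L : (ℝ × ℝ) →L[ℝ] ℝ => L (0, 1)) rfl
    set A : Set (ℝ × ℝ) := {x | |x.1| < 1/2 ∧ |x.2| < |x.1|} with hA
    set B : Set (ℝ × ℝ) := {x | |x.2| < 1/2 ∧ |x.1| < |x.2|} with hB
    have hAm : MeasurableSet A := by
      rw [hA, setOf_and]
      exact ((isOpen_lt continuous_fst.abs continuous_const).inter
        (isOpen_lt continuous_snd.abs continuous_fst.abs)).measurableSet
    have hBm : MeasurableSet B := by
      rw [hB, setOf_and]
      exact ((isOpen_lt continuous_snd.abs continuous_const).inter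
        (isOpen_lt continuous_fst.abs continuous_snd.abs)).measurableSet
    set gA : ℝ × ℝ → ℝ := A.indicator (fun x => 4 * x.1 * fderiv ℝ φ x (0, 1)) with hgA
    set gB : ℝ × ℝ → ℝ := B.indicator (fun x => -4 * x.2 * fderiv ℝ φ x (1, 0)) with hgB
    have hiA : Integrable gA := by
      refine Integrable.indicator ?_ hAm
      exact ((continuous_const.mul continuous_fst).mul hc2).integrable_of_hasCompactSupport
        hs2.mul_left
    have hiB : Integrable gB := by
      refine Integrable.indicator ?_ hBm
      exact ((continuous_const.mul continuous_snd).mul hc1).integrable_of_hasCompactSupport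
        hs1.mul_left
    have hsplit : ∀ x : ℝ × ℝ,
        (wDP x).1 * fderiv ℝ φ x (1, 0) + (wDP x).2 * fderiv ℝ φ x (0, 1) = gA x + gB x := by
      intro x
      rw [hgA, hgB, wDP]
      by_cases h1 : |x.1| < 1/2 ∧ |x.2| < |x.1|
      · have h2 : ¬(|x.2| < 1/2 ∧ |x.1| < |x.2|) := by
          rintro ⟨-, hb⟩; linarith [h1.2]
        rw [if_pos h1, indicator_of_mem (show x ∈ A from h1),
          indicator_of_notMem (show x ∉ B from h2)]
        simp
      · rw [if_neg h1, indicator_of_notMem (show x ∉ A from h1)]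
        by_cases h2 : |x.2| < 1/2 ∧ |x.1| < |x.2|
        · rw [if_pos h2, indicator_of_mem (show x ∈ B from h2)]
          simp
        · rw [if_neg h2, indicator_of_notMem (show x ∉ B from h2)]
          simp
    have slice2 : ∀ x a b : ℝ,
        (∫ y in a..b, fderiv ℝ φ (x, y) (0, 1)) = φ (x, b) - φ (x, a) := by
      intro x a b
      apply intervalIntegral.integral_eq_sub_of_hasDerivAt
      · intro y _
        have hd1 : HasFDerivAt φ (fderiv ℝ φ (x, y)) (x, y) :=
          (hφ.differentiable (by simp) (x, y)).hasFDerivAt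
        have hd2 : HasDerivAt (fun y : ℝ => ((x, y) : ℝ × ℝ)) (0, 1) y :=
          (hasDerivAt_const y x).prodMk (hasDerivAt_id y)
        exact hd1.comp_hasDerivAt y hd2
      · exact (hc2.comp (continuous_const.prodMk continuous_id)).intervalIntegrable a b
    have slice1 : ∀ y a b : ℝ,
        (∫ x in a..b, fderiv ℝ φ (x, y) (1, 0)) = φ (b, y) - φ (a, y) := by
      intro y a b
      apply intervalIntegral.integral_eq_sub_of_hasDerivAt
      · intro x _
        have hd1 : HasFDerivAt φ (fderiv ℝ φ (x, y)) (x, y) :=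
          (hφ.differentiable (by simp) (x, y)).hasFDerivAt
        have hd2 : HasDerivAt (fun x : ℝ => ((x, y) : ℝ × ℝ)) (1, 0) x :=
          (hasDerivAt_id x).prodMk (hasDerivAt_const x y)
        exact hd1.comp_hasDerivAt x hd2
      · exact (hc1.comp (continuous_id.prodMk continuous_const)).intervalIntegrable a b
    set FA : ℝ → ℝ := fun t => 4 * t * (φ (t, |t|) - φ (t, -|t|)) with hFA
    set FB : ℝ → ℝ := fun t => -4 * t * (φ (|t|, t) - φ (-|t|, t)) with hFB
    set S : Set ℝ := Ioo (-(1/2) : ℝ) (1/2) with hS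
    have hgAint : (∫ z, gA z) = ∫ t, S.indicator FA t := by
      rw [Measure.volume_eq_prod] at hiA ⊢
      rw [integral_prod _ hiA]
      have inner : ∀ x : ℝ, (∫ y, gA (x, y)) = S.indicator FA x := by
        intro x
        by_cases hx : |x| < 1/2
        · have hmem : x ∈ S := by rw [hS, mem_Ioo]; exact abs_lt.mp hx
          rw [indicator_of_mem hmem]
          have hpt : ∀ y, gA (x, y) =
              (Ioo (-|x|) |x|).indicator (fun y => 4 * x * fderiv ℝ φ (x, y) (0, 1)) y := by
            intro y
            rw [hgA]
            by_cases hy : |y| < |x|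
            · rw [indicator_of_mem (show (x, y) ∈ A from ⟨hx, hy⟩),
                indicator_of_mem (show y ∈ Ioo (-|x|) |x| from abs_lt.mp hy)]
            · rw [indicator_of_notMem (show (x, y) ∉ A from fun h => hy h.2),
                indicator_of_notMem (show y ∉ Ioo (-|x|) |x| from fun h => hy (abs_lt.mpr h))]
          simp_rw [hpt]
          rw [integral_indicator measurableSet_Ioo, ← integral_Ioc_eq_integral_Ioo,
            ← intervalIntegral.integral_of_le (neg_le_self (abs_nonneg x)),
            intervalIntegral.integral_const_mul, slice2]
        · have hmem : x ∉ S := by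
            rw [hS, mem_Ioo]; intro h; exact hx (abs_lt.mpr h)
          rw [indicator_of_notMem hmem]
          have hpt : ∀ y, gA (x, y) = 0 := by
            intro y
            rw [hgA, indicator_of_notMem (show (x, y) ∉ A from fun h => hx h.1)]
          simp_rw [hpt, integral_zero]
      simp_rw [inner]
    have hgBint : (∫ z, gB z) = ∫ t, S.indicator FB t := by
      rw [Measure.volume_eq_prod] at hiB ⊢
      rw [integral_prod_symm _ hiB]
      have inner : ∀ y : ℝ, (∫ x, gB (x, y)) = S.indicator FB y := by
        intro y
        by_cases hy : |y| < 1/2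
        · have hmem : y ∈ S := by rw [hS, mem_Ioo]; exact abs_lt.mp hy
          rw [indicator_of_mem hmem]
          have hpt : ∀ x, gB (x, y) =
              (Ioo (-|y|) |y|).indicator (fun x => -4 * y * fderiv ℝ φ (x, y) (1, 0)) x := by
            intro x
            rw [hgB]
            by_cases hx : |x| < |y|
            · rw [indicator_of_mem (show (x, y) ∈ B from ⟨hy, hx⟩),
                indicator_of_mem (show x ∈ Ioo (-|y|) |y| from abs_lt.mp hx)]
            · rw [indicator_of_notMem (show (x, y) ∉ B from fun h => hx h.2),
                indicator_of_notMem (show x ∉ Ioo (-|y|) |y| from fun h => hx (abs_lt.mpr h))]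
          simp_rw [hpt]
          rw [integral_indicator measurableSet_Ioo, ← integral_Ioc_eq_integral_Ioo,
            ← intervalIntegral.integral_of_le (neg_le_self (abs_nonneg y)),
            intervalIntegral.integral_const_mul, slice1]
        · have hmem : y ∉ S := by
            rw [hS, mem_Ioo]; intro h; exact hy (abs_lt.mpr h)
          rw [indicator_of_notMem hmem]
          have hpt : ∀ x, gB (x, y) = 0 := by
            intro x
            rw [hgB, indicator_of_notMem (show (x, y) ∉ B from fun h => hy h.1)]
          simp_rw [hpt, integral_zero]
      simp_rw [inner]
    have hFAc : Continuous FA := by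
      rw [hFA]
      exact (continuous_const.mul continuous_id).mul
        ((hφc.comp (continuous_id.prodMk continuous_abs)).sub
          (hφc.comp (continuous_id.prodMk continuous_abs.neg)))
    have hFBc : Continuous FB := by
      rw [hFB]
      exact (continuous_const.mul continuous_id).mul
        ((hφc.comp (continuous_abs.prodMk continuous_id)).sub
          (hφc.comp (continuous_abs.neg.prodMk continuous_id)))
    have hIA : Integrable (S.indicator FA) := by
      refine IntegrableOn.integrable_indicator ?_ measurableSet_Ioo
      exact (hFAc.integrableOn_Icc).mono_set Ioo_subset_Icc_self
    have hIB : Integrable (S.indicator FB) := by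
      refine IntegrableOn.integrable_indicator ?_ measurableSet_Ioo
      exact (hFBc.integrableOn_Icc).mono_set Ioo_subset_Icc_self
    simp_rw [hsplit]
    rw [integral_add hiA hiB, hgAint, hgBint, ← integral_add hIA hIB]
    set H : ℝ → ℝ := fun t => S.indicator FA t + S.indicator FB t with hH
    have hodd : ∀ t, H (-t) = -H t := by
      intro t
      rw [hH]
      by_cases ht : |t| < 1/2
      · have h1 : t ∈ S := by rw [hS, mem_Ioo]; exact abs_lt.mp ht
        have h2 : -t ∈ S := by
          rw [hS, mem_Ioo]
          have := abs_lt.mp ht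
          constructor <;> linarith
        simp only [indicator_of_mem h1, indicator_of_mem h2, hFA, hFB]
        rw [abs_neg]
        rcases le_or_gt 0 t with h | h
        · rw [abs_of_nonneg h]; ring_nf
        · rw [abs_of_neg h]; simp only [neg_neg]; ring_nf
      · have h1 : t ∉ S := by rw [hS, mem_Ioo]; intro h; exact ht (abs_lt.mpr h)
        have h2 : -t ∉ S := by
          rw [hS, mem_Ioo]; intro h
          rw [abs_lt] at ht; push_neg at ht
          rcases h with ⟨ha, hb⟩
          rcases ht (by linarith) with h'
          linarith
        simp only [indicator_of_notMem h1, indicator_of_notMem h2]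
        simp
    have hneg : (∫ t, H t) = - ∫ t, H t := by
      conv_lhs => rw [← integral_neg_eq_self H volume]
      simp_rw [hodd]
      rw [integral_neg]
    linarith
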